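/- arXiv:0807.2388 — 2 statements merged into one kernel-verified Lean document; each statement's English description precedes it below -/
import Mathlib

section
/- Let L = {j_1 < j_2 < ⋯ < j_s} ⊂ ℕ with s ≤ j_1, and for each j ∈ L let (I_i^j)_{i=1}^{p_j} be successive intervals with I_{p_j}^j < I_1^{j'} whenever j < j'. For x ∈ c_00(ℕ) define α_j(x) = (1/m_j) Σ_{i=1}^{p_j} ‖I_i^j x‖, where ‖·‖ is the norm induced by a norming set K that contains {±e_k*}, is closed under restriction to intervals, and is closed under the (A_{n_j}, 1/m_j) operation for each j. Then Σ_{j∈L} α_j(x) ≤ ‖x‖. -/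
/-!
For each level `j` pick functionals `f_{j,i} ∈ K` almost norming the pieces `I_i^j x` and restrict
them to `I_i^j`. Since `m_{u+1} = m_u²` and `p_{u+1} = p_u n_u` for `u ≥ 2`, applying the
`(A_{n_u}, 1/m_u)` operation to consecutive blocks of `n_u` functionals, for `u = j - 1` down to
`j_1`, rewrites `(1/m_j) Σ_i f_{j,i}` as `(1/m_{j_1}) Σ_b g_{j,b}` with `p_{j_1}` successive
`g_{j,b} ∈ K`. Concatenating over `j ∈ L` gives `s p_{j_1} ≤ j_1 p_{j_1} ≤ n_{j_1}` successive
functionals, and a last `(A_{n_{j_1}}, 1/m_{j_1})` operation yields one element of `K` whose value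
at `x` is `Σ_j (1/m_j) Σ_i f_{j,i}(I_i^j x)`.
-/

/-- The action `f(x) = Σ_a f(e_a) x(e_a)` of a functional on a vector. -/
def pair (f x : ℕ →₀ ℝ) : ℝ := ∑ a ∈ f.support, f a * x a

/-- The norm induced by a norming set `K` on `c₀₀(ℕ)`. -/
noncomputable def normK (K : Set (ℕ →₀ ℝ)) (x : ℕ →₀ ℝ) : ℝ :=
  sSup {r | ∃ f ∈ K, r = pair f x}

open Finset

lemma sum_Icc_one_eq_sum_range {M : Type*} [AddCommMonoid M] (q : ℕ) (g : ℕ → M) :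
    ∑ i ∈ Icc 1 q, g i = ∑ i ∈ range q, g (i + 1) := by
  rw [range_eq_Ico, sum_Ico_add', zero_add, Ico_add_one_right_eq_Icc]

lemma pair_eq_linearCombination (f x : ℕ →₀ ℝ) :
    pair f x = Finsupp.linearCombination ℝ x f := by
  simp only [pair, Finsupp.linearCombination_apply, Finsupp.sum, smul_eq_mul]

lemma pair_filter (Q : ℕ → Prop) [DecidablePred Q] (f x : ℕ →₀ ℝ) :
    pair (f.filter Q) x = pair f (x.filter Q) := by
  rw [pair, pair, Finsupp.support_filter, sum_filter]
  refine sum_congr rfl fun a _ => ?_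
  by_cases h : Q a <;> simp [h]

lemma pair_le_normK {K : Set (ℕ →₀ ℝ)} (hbdd : ∀ y, BddAbove {r | ∃ f ∈ K, r = pair f y})
    {f : ℕ →₀ ℝ} (hf : f ∈ K) (x : ℕ →₀ ℝ) : pair f x ≤ normK K x :=
  le_csSup (hbdd x) ⟨f, hf, rfl⟩

lemma exists_lt_pair {K : Set (ℕ →₀ ℝ)} (hK : K.Nonempty) (x : ℕ →₀ ℝ) {δ : ℝ} (hδ : 0 < δ) :
    ∃ f ∈ K, normK K x - δ < pair f x := by
  obtain ⟨g, hg⟩ := hK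
  have hne : {r | ∃ f ∈ K, r = pair f x}.Nonempty := ⟨_, g, hg, rfl⟩
  obtain ⟨_, ⟨f, hf, rfl⟩, hlt⟩ := exists_lt_of_lt_csSup hne (sub_lt_self (normK K x) hδ)
  exact ⟨f, hf, hlt⟩

lemma sum_mul_sum_normK_le {ι κ : Type*} {K : Set (ℕ →₀ ℝ)} (hK : K.Nonempty)
    {L : Finset ι} {t : ι → Finset κ} {c : ι → ℝ} (hc : ∀ j ∈ L, 0 ≤ c j)
    {y : ι → κ → ℕ →₀ ℝ} {C : ℝ}
    (h : ∀ f : ι → κ → ℕ →₀ ℝ, (∀ j i, f j i ∈ K) →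
      ∑ j ∈ L, c j * ∑ i ∈ t j, pair (f j i) (y j i) ≤ C) :
    ∑ j ∈ L, c j * ∑ i ∈ t j, normK K (y j i) ≤ C := by
  refine le_of_forall_pos_le_add fun ε hε => ?_
  set S := ∑ j ∈ L, c j * #(t j)
  have hS : 0 ≤ S := sum_nonneg fun j hj => mul_nonneg (hc j hj) (Nat.cast_nonneg _)
  set δ := ε / (S + 1)
  have hδ : 0 < δ := by positivity
  choose f hfK hf using fun j i => exists_lt_pair hK (y j i) hδ
  calc ∑ j ∈ L, c j * ∑ i ∈ t j, normK K (y j i)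
      ≤ ∑ j ∈ L, c j * ∑ i ∈ t j, (pair (f j i) (y j i) + δ) := by
        gcongr with j hj i
        · exact hc j hj
        · linarith [hf j i]
    _ = ∑ j ∈ L, c j * ∑ i ∈ t j, pair (f j i) (y j i) + S * δ := by
        simp only [sum_add_distrib, sum_const, nsmul_eq_mul, mul_add, S, sum_mul, mul_assoc]
    _ ≤ C + ε := by
        have : S * δ ≤ ε := by
          rw [mul_div_assoc', div_le_iff₀ (by positivity)]
          nlinarith
        linarith [h f hfK]

def IsClosedUnderOp (θ : ℝ) (N : ℕ) (K : Set (ℕ →₀ ℝ)) : Prop :=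
  ∀ (d : ℕ) (f : Fin d → (ℕ →₀ ℝ)), d ≤ N → (∀ t, f t ∈ K) →
    (∀ t t' : Fin d, t < t' → ∀ a ∈ (f t).support, ∀ b ∈ (f t').support, a < b) →
    θ • ∑ t, f t ∈ K

lemma IsClosedUnderOp.zero_mem {θ : ℝ} {N : ℕ} {K : Set (ℕ →₀ ℝ)}
    (hK : IsClosedUnderOp θ N K) : (0 : ℕ →₀ ℝ) ∈ K := by
  simpa using hK 0 Fin.elim0 N.zero_le Fin.rec0 Fin.rec0

structure IsBlockSeq (K : Set (ℕ →₀ ℝ)) (U : Set ℕ) (q : ℕ) (F : ℕ → ℕ →₀ ℝ) : Prop where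
  mem : ∀ i < q, F i ∈ K
  support_subset : ∀ i < q, ↑(F i).support ⊆ U
  lt : ∀ i i', i < i' → i' < q → ∀ a ∈ (F i).support, ∀ b ∈ (F i').support, a < b

namespace IsBlockSeq

variable {K : Set (ℕ →₀ ℝ)} {U V : Set ℕ} {q r : ℕ} {F G : ℕ → ℕ →₀ ℝ}

lemma smul_sum_mem {θ : ℝ} {N : ℕ} (hK : IsClosedUnderOp θ N K) (hF : IsBlockSeq K U q F)
    (hq : q ≤ N) : θ • ∑ i ∈ range q, F i ∈ K := by
  rw [← Fin.sum_univ_eq_sum_range]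
  exact hK q (fun i => F i) hq (fun i => hF.mem i i.2)
    fun i i' h => hF.lt i i' h i'.2

lemma append (hF : IsBlockSeq K U q F) (hG : IsBlockSeq K V r G)
    (hUV : ∀ a ∈ U, ∀ b ∈ V, a < b) :
    IsBlockSeq K (U ∪ V) (q + r) (fun i => if i < q then F i else G (i - q)) where
  mem i hi := by
    split_ifs with h
    exacts [hF.mem i h, hG.mem (i - q) (by omega)]
  support_subset i hi := by
    split_ifs with h
    exacts [(hF.support_subset i h).trans Set.subset_union_left,
      (hG.support_subset (i - q) (by omega)).trans Set.subset_union_right]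
  lt i i' hii' hi' a ha b hb := by
    by_cases h' : i' < q
    · simp only [h', lt_trans hii' h', if_true] at ha hb
      exact hF.lt i i' hii' h' a ha b hb
    by_cases h : i < q
    · simp only [h, h', if_true, if_false] at ha hb
      exact hUV a (hF.support_subset i h ha) b (hG.support_subset (i' - q) (by omega) hb)
    · simp only [h, h', if_false] at ha hb
      exact hG.lt (i - q) (i' - q) (by omega) (by omega) a ha b hb

end IsBlockSeq

lemma sum_range_append (q r : ℕ) (F G : ℕ → ℕ →₀ ℝ) :
    ∑ i ∈ range (q + r), (if i < q then F i else G (i - q))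
      = ∑ i ∈ range q, F i + ∑ i ∈ range r, G i := by
  rw [sum_range_add]
  congr 1
  · exact sum_congr rfl fun i hi => if_pos (mem_range.1 hi)
  · exact sum_congr rfl fun i _ => by simp

noncomputable def blockSum (θ : ℝ) (N : ℕ) (F : ℕ → ℕ →₀ ℝ) (b : ℕ) : ℕ →₀ ℝ :=
  θ • ∑ i ∈ range N, F (b * N + i)

lemma sum_range_blockSum (θ : ℝ) (N P : ℕ) (F : ℕ → ℕ →₀ ℝ) :
    ∑ b ∈ range P, blockSum θ N F b = θ • ∑ i ∈ range (P * N), F i := by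
  simp only [blockSum, ← smul_sum]
  congr 1
  induction P with
  | zero => simp
  | succ P ih => rw [sum_range_succ, ih, Nat.succ_mul, sum_range_add]

lemma exists_of_mem_support_blockSum {θ : ℝ} {N : ℕ} {F : ℕ → ℕ →₀ ℝ} {b a : ℕ}
    (ha : a ∈ (blockSum θ N F b).support) : ∃ i < N, a ∈ (F (b * N + i)).support := by
  obtain ⟨i, hi, ha⟩ := mem_biUnion.1 (Finsupp.support_finsetSum (Finsupp.support_smul ha))
  exact ⟨i, mem_range.1 hi, ha⟩

lemma IsBlockSeq.blockSum {K : Set (ℕ →₀ ℝ)} {U : Set ℕ} {θ : ℝ} {N P : ℕ}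
    {F : ℕ → ℕ →₀ ℝ} (hK : IsClosedUnderOp θ N K) (hF : IsBlockSeq K U (P * N) F) :
    IsBlockSeq K U P (blockSum θ N F) := by
  have hlt : ∀ b < P, ∀ i < N, b * N + i < P * N := fun b hb i hi =>
    calc b * N + i < (b + 1) * N := by rw [Nat.succ_mul]; omega
      _ ≤ P * N := Nat.mul_le_mul_right N hb
  refine ⟨fun b hb => ?_, fun b hb a ha => ?_, fun b b' hbb' hb' a ha c hc => ?_⟩
  · refine IsBlockSeq.smul_sum_mem (U := U) hK ⟨fun i hi => ?_, fun i hi => ?_, ?_⟩ le_rfl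
    · exact hF.mem _ (hlt b hb i hi)
    · exact hF.support_subset _ (hlt b hb i hi)
    · exact fun i i' hii' hi' => hF.lt _ _ (by omega) (hlt b hb i' hi')
  · obtain ⟨i, hi, ha⟩ := exists_of_mem_support_blockSum ha
    exact hF.support_subset _ (hlt b hb i hi) ha
  · obtain ⟨i, hi, ha⟩ := exists_of_mem_support_blockSum ha
    obtain ⟨i', hi', hc⟩ := exists_of_mem_support_blockSum hc
    have : (b + 1) * N ≤ b' * N := Nat.mul_le_mul_right N hbb'
    exact hF.lt _ _ (by rw [Nat.succ_mul] at this; omega) (hlt b' hb' i' hi') a ha c hc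

section Levels

variable {K : Set (ℕ →₀ ℝ)} {m n p : ℕ → ℕ}

lemma IsBlockSeq.exists_descend (hop : ∀ u, IsClosedUnderOp (m u)⁻¹ (n u) K) {U : Set ℕ}
    {t j : ℕ} (htj : t ≤ j) (hm : ∀ u, t ≤ u → u < j → m (u + 1) = m u ^ 2)
    (hp : ∀ u, t ≤ u → u < j → p (u + 1) = p u * n u) {F : ℕ → ℕ →₀ ℝ}
    (hF : IsBlockSeq K U (p j) F) :
    ∃ G, IsBlockSeq K U (p t) G ∧
      (m t : ℝ)⁻¹ • ∑ i ∈ range (p t), G i = (m j : ℝ)⁻¹ • ∑ i ∈ range (p j), F i := by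
  induction j, htj using Nat.le_induction generalizing F with
  | base => exact ⟨F, hF, rfl⟩
  | succ j htj ih =>
    rw [hp j htj j.lt_succ_self] at hF ⊢
    obtain ⟨G, hG, hGsum⟩ := ih (fun u hu huj => hm u hu (by omega))
      (fun u hu huj => hp u hu (by omega)) (hF.blockSum (hop j))
    refine ⟨G, hG, ?_⟩
    rw [hGsum, sum_range_blockSum, smul_smul, hm j htj j.lt_succ_self, Nat.cast_pow, sq,
      mul_inv]

lemma exists_isBlockSeq_sum (L : Finset ℕ) {q : ℕ} {U : ℕ → Set ℕ}
    (hU : ∀ j j', j < j' → ∀ a ∈ U j, ∀ b ∈ U j', a < b) {G : ℕ → ℕ → ℕ →₀ ℝ}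
    (hG : ∀ j ∈ L, IsBlockSeq K (U j) q (G j)) :
    ∃ H, IsBlockSeq K (⋃ j ∈ L, U j) (#L * q) H ∧
      ∑ i ∈ range (#L * q), H i = ∑ j ∈ L, ∑ i ∈ range q, G j i := by
  induction L using Finset.induction_on_max with
  | empty => exact ⟨0, ⟨by simp, by simp, by simp⟩, by simp⟩
  | insert j L hjL ih =>
    have hj : j ∉ L := fun h => (hjL j h).false
    obtain ⟨H, hH, hHsum⟩ := ih fun j' hj' => hG j' (mem_insert_of_mem hj')
    have hUL : ∀ a ∈ ⋃ j' ∈ L, U j', ∀ b ∈ U j, a < b := by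
      simp only [Set.mem_iUnion]
      rintro a ⟨j', hj', ha⟩ b hb
      exact hU j' j (hjL j' hj') a ha b hb
    rw [card_insert_of_notMem hj, Nat.succ_mul, set_biUnion_insert, Set.union_comm]
    refine ⟨_, hH.append (hG j (mem_insert_self j L)) hUL, ?_⟩
    rw [sum_range_append, sum_insert hj, hHsum, add_comm]

lemma sum_smul_sum_mem (hop : ∀ u, IsClosedUnderOp (m u)⁻¹ (n u) K)
    (hm : ∀ u, 2 ≤ u → m (u + 1) = m u ^ 2) (hp : ∀ u, 1 ≤ u → p (u + 1) = p u * n u)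
    (hpn : ∀ u, 1 ≤ u → u * p u ≤ n u) {L : Finset ℕ} (hL : ∀ j ∈ L, #L ≤ j)
    {U : ℕ → Set ℕ} (hU : ∀ j j', j < j' → ∀ a ∈ U j, ∀ b ∈ U j', a < b)
    {F : ℕ → ℕ → ℕ →₀ ℝ} (hF : ∀ j ∈ L, IsBlockSeq K (U j) (p j) (F j)) :
    ∑ j ∈ L, (m j : ℝ)⁻¹ • ∑ i ∈ range (p j), F j i ∈ K := by
  rcases L.eq_empty_or_nonempty with rfl | hL0
  · simpa using (hop 0).zero_mem
  set J := L.min' hL0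
  have hJL : #L ≤ J := hL J (L.min'_mem hL0)
  have hJ : 1 ≤ J := (card_pos.2 hL0).trans_le hJL
  -- a level above `J` forces `#L ≥ 2`, so the recursion `m (u + 1) = m u ^ 2` holds from `J` on
  have hJ2 : ∀ j ∈ L, J < j → 2 ≤ J := fun j hj hJj =>
    (one_lt_card.2 ⟨J, L.min'_mem hL0, j, hj, hJj.ne⟩).trans_le hJL
  have hdesc : ∀ j ∈ L, ∃ G, IsBlockSeq K (U j) (p J) G ∧
      (m J : ℝ)⁻¹ • ∑ i ∈ range (p J), G i = (m j : ℝ)⁻¹ • ∑ i ∈ range (p j), F j i :=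
    fun j hj => (hF j hj).exists_descend hop (L.min'_le j hj)
      (fun u hJu huj => hm u ((hJ2 j hj (by omega)).trans hJu))
      (fun u hJu _ => hp u (hJ.trans hJu))
  choose! G hG hGsum using hdesc
  obtain ⟨H, hH, hHsum⟩ := exists_isBlockSeq_sum L hU hG
  have hmem := hH.smul_sum_mem (hop J) ((Nat.mul_le_mul_right _ hJL).trans (hpn J hJ))
  rwa [hHsum, smul_sum, sum_congr rfl hGsum] at hmem

end Levels

section Arithmetic

variable {m n p : ℕ → ℕ}

lemma pos_of_sq_rec (hm2 : m 2 = 2) (hmrec : ∀ j, 3 ≤ j → m j = m (j - 1) ^ 2) :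
    ∀ u, 2 ≤ u → 0 < m u := by
  intro u hu
  induction u, hu using Nat.le_induction with
  | base => omega
  | succ u hu ih => rw [hmrec (u + 1) (by omega), Nat.add_sub_cancel]; positivity

lemma succ_eq_mul_of_eq_prod (hp : ∀ j, p j = ∏ i ∈ Icc 1 (j - 1), n i) {u : ℕ} (hu : 1 ≤ u) :
    p (u + 1) = p u * n u := by
  obtain ⟨v, rfl⟩ := Nat.exists_eq_add_of_le' hu
  rw [hp, hp, Nat.add_sub_cancel, Nat.add_sub_cancel, prod_Icc_succ_top (by omega)]

lemma mul_prod_le_of_growth (hm : ∀ u, 2 ≤ u → 0 < m u) (hn1 : 2 ^ 3 * m 3 ≤ n 1)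
    (hnrec : ∀ j, 2 ≤ j → (4 * n (j - 1)) ^ 5 * m j ≤ n j)
    (hp : ∀ j, p j = ∏ i ∈ Icc 1 (j - 1), n i) : ∀ u, 1 ≤ u → u * p u ≤ n u := by
  intro u hu
  induction u, hu using Nat.le_induction with
  | base =>
    have := hm 3 (by norm_num)
    rw [hp, Nat.sub_self, Icc_eq_empty (by norm_num), prod_empty]
    omega
  | succ u hu ih =>
    have hnext := hnrec (u + 1) (by omega)
    rw [Nat.add_sub_cancel] at hnext
    have hmu := hm (u + 1) (by omega)
    calc (u + 1) * p (u + 1) = (u + 1) * p u * n u := by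
          rw [succ_eq_mul_of_eq_prod hp hu, mul_assoc]
      _ ≤ 2 * n u * n u := Nat.mul_le_mul_right _ (by nlinarith)
      _ ≤ (4 * n u) ^ 2 := by nlinarith
      _ ≤ (4 * n u) ^ 5 := by
          rcases Nat.eq_zero_or_pos (n u) with h | h
          · simp [h]
          · exact Nat.pow_le_pow_right (by omega) (by norm_num)
      _ ≤ (4 * n u) ^ 5 * m (u + 1) := Nat.le_mul_of_pos_right _ hmu
      _ ≤ n (u + 1) := hnext

end Arithmetic

lemma isBlockSeq_filter {K : Set (ℕ →₀ ℝ)}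
    (hrestr : ∀ f ∈ K, ∀ a b : ℕ, f.filter (· ∈ Icc a b) ∈ K) {q : ℕ} {I : ℕ → Finset ℕ}
    (hint : ∀ i, ∃ a b, I i = Icc a b)
    (hsucc : ∀ i i', i < i' → i' < q → ∀ a ∈ I i, ∀ b ∈ I i', a < b) {f : ℕ → ℕ →₀ ℝ}
    (hf : ∀ i, f i ∈ K) :
    IsBlockSeq K (⋃ i < q, ↑(I i)) q (fun i => (f i).filter (· ∈ I i)) where
  mem i _ := by
    obtain ⟨a, b, hab⟩ := hint i
    simpa only [hab] using hrestr (f i) (hf i) a b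
  support_subset i hi a ha := by
    rw [Finsupp.support_filter, coe_filter] at ha
    exact Set.mem_biUnion hi ha.2
  lt i i' hii' hi' a ha b hb := by
    rw [Finsupp.support_filter, mem_filter] at ha hb
    exact hsucc i i' hii' hi' a ha.2 b hb.2

theorem stmt14_general (m n : ℕ → ℕ) (hm2 : m 2 = 2)
    (hmrec : ∀ j, 3 ≤ j → m j = (m (j - 1)) ^ 2)
    (hn1 : 2 ^ 3 * m 3 ≤ n 1)
    (hnrec : ∀ j, 2 ≤ j → (4 * n (j - 1)) ^ 5 * m j ≤ n j)
    (p : ℕ → ℕ) (hp : ∀ j, p j = ∏ i ∈ Finset.Icc 1 (j - 1), n i)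
    (K : Set (ℕ →₀ ℝ))
    (hrestr : ∀ f ∈ K, ∀ a b : ℕ, f.filter (· ∈ Finset.Icc a b) ∈ K)
    (hop : ∀ (j d : ℕ) (f : Fin d → (ℕ →₀ ℝ)), d ≤ n j → (∀ t, f t ∈ K) →
      (∀ t t' : Fin d, t < t' → ∀ a ∈ (f t).support, ∀ b ∈ (f t').support, a < b) →
      ((m j : ℝ))⁻¹ • ∑ t, f t ∈ K)
    (hbdd : ∀ x : ℕ →₀ ℝ, BddAbove {r | ∃ f ∈ K, r = pair f x})
    (I : ℕ → ℕ → Finset ℕ)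
    (hint : ∀ j i, ∃ a b, I j i = Finset.Icc a b)
    (hsucc : ∀ j i i', 1 ≤ i → i < i' → i' ≤ p j → ∀ a ∈ I j i, ∀ b ∈ I j i', a < b)
    (hsucc' : ∀ j j' i i', j < j' → 1 ≤ i → i ≤ p j → 1 ≤ i' → i' ≤ p j' →
      ∀ a ∈ I j i, ∀ b ∈ I j' i', a < b)
    (L : Finset ℕ) (hL : ∀ j ∈ L, L.card ≤ j)
    (x : ℕ →₀ ℝ) :
    ∑ j ∈ L, ((m j : ℝ))⁻¹ *
        ∑ i ∈ Finset.Icc 1 (p j), normK K (x.filter (· ∈ I j i)) ≤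
      normK K x := by
  refine sum_mul_sum_normK_le ⟨0, IsClosedUnderOp.zero_mem (hop 0)⟩ (fun j _ => by positivity)
    fun f hf => ?_
  have hF : ∀ j ∈ L, IsBlockSeq K (⋃ i < p j, ↑(I j (i + 1))) (p j)
      (fun i => (f j (i + 1)).filter (· ∈ I j (i + 1))) := fun j _ =>
    isBlockSeq_filter hrestr (fun i => hint j (i + 1))
      (fun i i' hii' hi' => hsucc j _ _ (by omega) (by omega) (by omega)) (fun i => hf j (i + 1))
  have hU : ∀ j j', j < j' → ∀ a ∈ ⋃ i < p j, (I j (i + 1) : Set ℕ),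
      ∀ b ∈ ⋃ i < p j', (I j' (i + 1) : Set ℕ), a < b := by
    simp only [Set.mem_iUnion]
    rintro j j' hjj' a ⟨i, hi, ha⟩ b ⟨i', hi', hb⟩
    exact hsucc' j j' _ _ hjj' (by omega) (by omega) (by omega) (by omega) a ha b hb
  have hmem := sum_smul_sum_mem hop (fun u hu => by simpa using hmrec (u + 1) (by omega))
    (fun u hu => succ_eq_mul_of_eq_prod hp hu)
    (mul_prod_le_of_growth (pos_of_sq_rec hm2 hmrec) hn1 hnrec hp) hL hU hF
  calc ∑ j ∈ L, (m j : ℝ)⁻¹ * ∑ i ∈ Icc 1 (p j), pair (f j i) (x.filter (· ∈ I j i))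
      = pair (∑ j ∈ L, (m j : ℝ)⁻¹ •
          ∑ i ∈ range (p j), (f j (i + 1)).filter (· ∈ I j (i + 1))) x := by
        simp only [sum_Icc_one_eq_sum_range, ← pair_filter]
        simp only [pair_eq_linearCombination, map_sum, map_smul, smul_eq_mul]
    _ ≤ normK K x := pair_le_normK hbdd hmem x

/-- Let `L = {j_1 < ⋯ < j_s} ⊂ ℕ` with `s ≤ j_1` and, for each
`j`, let `(I_i^j)_{i=1}^{p_j}` be successive intervals, with all intervals of
level `j` preceding all intervals of level `j'` whenever `j < j'`.  For
`x ∈ c₀₀(ℕ)` let `α_j(x) = (1/m_j) Σ_{i=1}^{p_j} ‖I_i^j x‖`, where `‖·‖` is the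
norm induced by a norming set `K` containing `{±e_k*}`, closed under restriction
to intervals and closed under the `(A_{n_j}, 1/m_j)` operation for each `j`.
Then `Σ_{j ∈ L} α_j(x) ≤ ‖x‖`. -/
theorem stmt14 (m n : ℕ → ℕ) (hm1 : m 1 = 2) (hm2 : m 2 = 2)
    (hmrec : ∀ j, 3 ≤ j → m j = (m (j - 1)) ^ 2)
    (hn1 : 2 ^ 3 * m 3 ≤ n 1)
    (hnrec : ∀ j, 2 ≤ j → (4 * n (j - 1)) ^ 5 * m j ≤ n j)
    (p : ℕ → ℕ) (hp : ∀ j, p j = ∏ i ∈ Finset.Icc 1 (j - 1), n i)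
    (K : Set (ℕ →₀ ℝ))
    (hbasis : ∀ r : ℕ, Finsupp.single r (1 : ℝ) ∈ K)
    (hsym : ∀ f ∈ K, -f ∈ K)
    (hrestr : ∀ f ∈ K, ∀ a b : ℕ, f.filter (· ∈ Finset.Icc a b) ∈ K)
    (hop : ∀ (j d : ℕ) (f : Fin d → (ℕ →₀ ℝ)), d ≤ n j → (∀ t, f t ∈ K) →
      (∀ t t' : Fin d, t < t' → ∀ a ∈ (f t).support, ∀ b ∈ (f t').support, a < b) →
      ((m j : ℝ))⁻¹ • ∑ t, f t ∈ K)
    (hbdd : ∀ x : ℕ →₀ ℝ, BddAbove {r | ∃ f ∈ K, r = pair f x})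
    (I : ℕ → ℕ → Finset ℕ)
    (hint : ∀ j i, ∃ a b, I j i = Finset.Icc a b)
    (hsucc : ∀ j i i', 1 ≤ i → i < i' → i' ≤ p j → ∀ a ∈ I j i, ∀ b ∈ I j i', a < b)
    (hsucc' : ∀ j j' i i', j < j' → 1 ≤ i → i ≤ p j → 1 ≤ i' → i' ≤ p j' →
      ∀ a ∈ I j i, ∀ b ∈ I j' i', a < b)
    (L : Finset ℕ) (hL : ∀ j ∈ L, L.card ≤ j)
    (x : ℕ →₀ ℝ) :
    ∑ j ∈ L, ((m j : ℝ))⁻¹ *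
        ∑ i ∈ Finset.Icc 1 (p j), normK K (x.filter (· ∈ I j i)) ≤
      normK K x :=
  stmt14_general m n hm2 hmrec hn1 hnrec p hp K hrestr hop hbdd I hint hsucc hsucc' L hL x
end

section
/- Let W be a subset of c_00(ℕ) and suppose every g ∈ W with w(g) ≥ m (weight at least m) satisfies |g(x)| ≤ 1/w(g) for x = (1/M)Σ_{l=1}^M e_l. Suppose g = (1/w)Σ_{k=1}^d g_k with d ≤ 4n, each g_k ∈ W, and #{l : |g_k(e_l)| > 1/m} ≤ B for each k. If M ≥ 4n · B · m, then |g(x)| ≤ 2/(w·m). -/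
open Finset Function

theorem pair_eq_sum_of_notMem {f x : ℕ →₀ ℝ} {s : Finset ℕ} (hx : ∀ a ∉ s, x a = 0) :
    pair f x = ∑ a ∈ s, f a * x a := by
  unfold pair
  rw [sum_subset (subset_union_left (s₂ := s))
      fun a _ ha ↦ by rw [Finsupp.notMem_support_iff.mp ha, zero_mul],
    ← sum_subset (subset_union_right (s₁ := f.support))
      fun a _ ha ↦ by rw [hx a ha, mul_zero]]

theorem pair_smul_sum_single (f : ℕ →₀ ℝ) (c : ℝ) (s : Finset ℕ) :
    pair f (c • ∑ l ∈ s, Finsupp.single l 1) = c * ∑ a ∈ s, f a := by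
  have hx : ∀ a, (c • ∑ l ∈ s, Finsupp.single l (1 : ℝ)) a = if a ∈ s then c else 0 := by
    simp [Finsupp.single_apply]
  rw [pair_eq_sum_of_notMem (s := s) fun a ha ↦ by rw [hx, if_neg ha], mul_sum]
  exact sum_congr rfl fun a ha ↦ by rw [hx, if_pos ha, mul_comm]

theorem pair_smul_left (c : ℝ) (f x : ℕ →₀ ℝ) : pair (c • f) x = c * pair f x := by
  rw [pair, sum_subset Finsupp.support_smul
    fun a _ ha ↦ by rw [Finsupp.notMem_support_iff.mp ha, zero_mul], pair, mul_sum]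
  simp only [Finsupp.smul_apply, smul_eq_mul, mul_assoc]

theorem Finsupp.abs_sum_apply_le_of_pairwise_disjoint {ι α : Type*} [Fintype ι]
    {f : ι → α →₀ ℝ} (hf : Pairwise (Disjoint on fun k ↦ (f k).support)) {c : ℝ} (hc : 0 ≤ c)
    (a : α) (h : ∀ k, |f k a| ≤ c) : |(∑ k, f k) a| ≤ c := by
  rw [Finsupp.finsetSum_apply]
  by_cases ha : ∃ k, a ∈ (f k).support
  · obtain ⟨k, hk⟩ := ha
    have hothers (k' : ι) (hk' : k' ≠ k) : f k' a = 0 :=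
      notMem_support_iff.mp fun hk'' ↦ disjoint_left.mp (hf hk' : Disjoint (f k').support _) hk'' hk
    rw [sum_eq_single_of_mem k (mem_univ k) fun k' _ ↦ hothers k']
    exact h k
  · push Not at ha
    simpa [notMem_support_iff.mp (ha _)] using hc

theorem Finsupp.abs_apply_le_of_notMem_filter {α : Type*} {f : α →₀ ℝ} {ε : ℝ} (hε : 0 ≤ ε)
    {a : α} (ha : a ∉ f.support.filter fun l ↦ ε < |f l|) : |f a| ≤ ε := by
  by_contra! h
  refine ha (mem_filter.mpr ⟨mem_support_iff.mpr fun h0 ↦ ?_, h⟩)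
  rw [h0, abs_zero] at h
  exact h.not_ge hε

theorem sum_abs_le_card_add_card_mul {α : Type*} [DecidableEq α] {u : α → ℝ} {s D : Finset α}
    {ε : ℝ} (hε : 0 ≤ ε) (hD : ∀ a ∈ D, |u a| ≤ 1) (hε' : ∀ a ∉ D, |u a| ≤ ε) :
    ∑ a ∈ s, |u a| ≤ #D + #s * ε := by
  rw [← sum_filter_add_sum_filter_not s (fun a ↦ a ∈ D)]
  gcongr
  · calc ∑ a ∈ s with a ∈ D, |u a| ≤ ∑ a ∈ s with a ∈ D, (1 : ℝ) :=
          sum_le_sum fun a ha ↦ hD a (mem_filter.mp ha).2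
      _ ≤ #D := by
          rw [sum_const, nsmul_one]
          exact_mod_cast card_le_card fun a ha ↦ (mem_filter.mp ha).2
  · calc ∑ a ∈ s with a ∉ D, |u a| ≤ ∑ a ∈ s with a ∉ D, ε :=
          sum_le_sum fun a ha ↦ hε' a (mem_filter.mp ha).2
      _ ≤ #s * ε := by
          rw [sum_const, nsmul_eq_mul]
          gcongr
          exact filter_subset _ s

theorem abs_pair_smul_sum_single_le {f : ℕ →₀ ℝ} {c ε : ℝ} {s D : Finset ℕ} (hc : 0 ≤ c)
    (hε : 0 ≤ ε) (hD : ∀ a ∈ D, |f a| ≤ 1) (hε' : ∀ a ∉ D, |f a| ≤ ε) :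
    |pair f (c • ∑ l ∈ s, Finsupp.single l 1)| ≤ c * (#D + #s * ε) := by
  rw [pair_smul_sum_single, abs_mul, abs_of_nonneg hc]
  gcongr
  exact (abs_sum_le_sum_abs _ _).trans (sum_abs_le_card_add_card_mul hε hD hε')

theorem stmt16_general (W : Set (ℕ →₀ ℝ))
    (hcoord : ∀ g' ∈ W, ∀ l, |g' l| ≤ 1)
    (m M nn B w d : ℕ) (hm : 1 ≤ m)
    (x : ℕ →₀ ℝ)
    (hx : x = ((M : ℝ))⁻¹ • ∑ l ∈ Finset.Icc 1 M, Finsupp.single l (1 : ℝ))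
    (gk : Fin d → (ℕ →₀ ℝ)) (hgk : ∀ k, gk k ∈ W) (hd : d ≤ 4 * nn)
    (hdisj : ∀ k k' : Fin d, k ≠ k' → Disjoint (gk k).support (gk k').support)
    (hB : ∀ k, ((gk k).support.filter (fun l => 1 / (m : ℝ) < |(gk k) l|)).card ≤ B)
    (g : ℕ →₀ ℝ) (hg : g = ((w : ℝ))⁻¹ • ∑ k, gk k)
    (hMbig : 4 * nn * B * m ≤ M) :
    |pair g x| ≤ 2 / ((w : ℝ) * m) := by
  set D := univ.biUnion fun k ↦ (gk k).support.filter fun l ↦ 1 / (m : ℝ) < |gk k l|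
  have hDcard : (#D : ℝ) ≤ M * (1 / m) := by
    have hD : #D * m ≤ M := calc
      #D * m ≤ d * B * m := by
        gcongr
        exact (card_biUnion_le_card_mul univ _ B fun k _ ↦ hB k).trans_eq (by rw [card_fin])
      _ ≤ 4 * nn * B * m := by gcongr
      _ ≤ M := hMbig
    rw [mul_one_div, le_div_iff₀ (by positivity)]
    exact_mod_cast hD
  have hlarge (a : ℕ) : |(∑ k, gk k) a| ≤ 1 :=
    Finsupp.abs_sum_apply_le_of_pairwise_disjoint hdisj zero_le_one a fun k ↦ hcoord _ (hgk k) a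
  have hsmall (a : ℕ) (ha : a ∉ D) : |(∑ k, gk k) a| ≤ 1 / m :=
    Finsupp.abs_sum_apply_le_of_pairwise_disjoint hdisj (by positivity) a fun k ↦
      Finsupp.abs_apply_le_of_notMem_filter (by positivity) fun hk ↦
        ha (mem_biUnion.mpr ⟨k, mem_univ k, hk⟩)
  have hsum := abs_pair_smul_sum_single_le (s := Icc 1 M) (inv_nonneg.mpr M.cast_nonneg)
    (by positivity) (fun a _ ↦ hlarge a) hsmall
  rw [Nat.card_Icc, Nat.add_sub_cancel] at hsum
  rw [hg, hx, pair_smul_left, abs_mul, abs_inv, Nat.abs_cast]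
  calc (w : ℝ)⁻¹ * |pair (∑ k, gk k) ((M : ℝ)⁻¹ • ∑ l ∈ Icc 1 M, Finsupp.single l 1)|
      ≤ (w : ℝ)⁻¹ * ((M : ℝ)⁻¹ * (M * (1 / m) + M * (1 / m))) := by
        gcongr
        exact hsum.trans (by gcongr)
    _ = (w : ℝ)⁻¹ * ((M : ℝ)⁻¹ * M) * (2 / m) := by ring
    _ ≤ (w : ℝ)⁻¹ * 1 * (2 / m) := by gcongr; exact inv_mul_le_one
    _ = 2 / ((w : ℝ) * m) := by ring

/-- splitting argument of Lemma 4.4(ii): let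
`x = (1/M) Σ_{l=1}^M e_l` and let `W` be a set of norming functionals (so
members have coordinates of absolute value at most `1`), with weight function
`wt`, such that every `g' ∈ W` with `wt g' ≥ m` satisfies `|g'(x)| ≤ 1/wt g'`.
Suppose `g = (1/w) Σ_{k=1}^d g_k` with `d ≤ 4n`, the `g_k ∈ W` disjointly
supported, and `#{l : |g_k(e_l)| > 1/m} ≤ B` for each `k`.  If
`M ≥ 4 n B m`, then `|g(x)| ≤ 2/(w m)`. -/
theorem stmt16 (W : Set (ℕ →₀ ℝ)) (wt : (ℕ →₀ ℝ) → ℕ)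
    (hcoord : ∀ g' ∈ W, ∀ l, |g' l| ≤ 1)
    (m M nn B w d : ℕ) (hm : 1 ≤ m) (hw : 1 ≤ w) (hM : 1 ≤ M)
    (x : ℕ →₀ ℝ)
    (hx : x = ((M : ℝ))⁻¹ • ∑ l ∈ Finset.Icc 1 M, Finsupp.single l (1 : ℝ))
    (hW : ∀ g' ∈ W, m ≤ wt g' → |pair g' x| ≤ 1 / (wt g' : ℝ))
    (gk : Fin d → (ℕ →₀ ℝ)) (hgk : ∀ k, gk k ∈ W) (hd : d ≤ 4 * nn)
    (hdisj : ∀ k k' : Fin d, k ≠ k' → Disjoint (gk k).support (gk k').support)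
    (hB : ∀ k, ((gk k).support.filter (fun l => 1 / (m : ℝ) < |(gk k) l|)).card ≤ B)
    (g : ℕ →₀ ℝ) (hg : g = ((w : ℝ))⁻¹ • ∑ k, gk k)
    (hMbig : 4 * nn * B * m ≤ M) :
    |pair g x| ≤ 2 / ((w : ℝ) * m) :=
  stmt16_general W hcoord m M nn B w d hm x hx gk hgk hd hdisj hB g hg hMbig
end
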